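/- Let H₁,…,H_K be complex channel matrices, N₁,…,N_K positive integers with N = ∑_k N_k, and 𝒾 > 0. Suppose the recursively defined precoders T̃_k (T̃_k = U_{N_k,k} Γ_k^{1/2} S_k, built from the eigenvalue decomposition of 𝒜_k = H_kᴴ Σ_k⁻¹ H_kᴴ-whitened Gram matrices with inverse water-filling loadings for per-user information 𝒾_k = (N_k/N)𝒾, Σ_{k+1} = Σ_k + H_k T̃_k T̃_kᴴ H_kᴴ, Σ₁ = I) satisfy N_k ≤ r_k for all k, and that each S_k is chosen as the S-factor of the equal-diagonal QRS decomposition of J_k^{1/2}, where J_k = I + T̃_kᴴ H_kᴴ Σ_k⁻¹ H_k T̃_k. Then the Cholesky R-factor R_k of each J_k has all diagonal entries equal to 2^{𝒾/(2N)}, and the average MSE of MMSE decision-feedback detection satisfies (1/N) ∑_{k=1}^{K} ∑_{j=1}^{N_k} ([R_k]_{jj})⁻² = 2^{-𝒾/N}; hence the T̃_k attain the minimum of the average MSE over all precoder sequences {T_k} with log₂ det(I + ∑_k H_k T_k T_kᴴ H_kᴴ) = 𝒾. -/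

import Mathlib

/-!
Under the design, `J k` is unitarily similar to `diag (1 + γ i λ i)` (the precoder diagonalises
`A k` in its eigenbasis), and inverse water-filling makes this product `2 ^ 𝒾_k`. As the Cholesky
factor has equal diagonal, `det J k = ∏ [R k]ⱼⱼ²` pins every `[R k]ⱼⱼ` to `2 ^ (𝒾 / (2N))`.
For any other precoder sequence, the matrix determinant lemma telescopes
`det (1 + ∑ H k T k (T k)ᴴ (H k)ᴴ)` into `∏ k, det J k = ∏ k j, [R k]ⱼⱼ²`, so this product is
`2 ^ 𝒾`, and AM-GM bounds the mean of the `[R k]ⱼⱼ⁻²` below by `2 ^ (-𝒾/N)`.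
-/

open Matrix BigOperators Finset
open scoped ComplexOrder

@[to_additive]
theorem Fin.apply_last_eq_mul_prod {M : Type*} [CommMonoid M] {n : ℕ} (f : Fin (n + 1) → M)
    (g : Fin n → M) (h : ∀ i, f i.succ = f i.castSucc * g i) :
    f (Fin.last n) = f 0 * ∏ i, g i := by
  induction n with
  | zero => simp
  | succ n ih =>
    rw [← Fin.succ_last, h, Fin.prod_univ_castSucc, ← mul_assoc]
    exact congrArg (· * g (last n)) (ih (fun i => f i.castSucc) _ fun i => h i.castSucc)

theorem det_conjTranspose_mul_self_of_blockTriangular {n : Type*} [Fintype n] [DecidableEq n]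
    [LinearOrder n] {R : Matrix n n ℂ} (hR : R.BlockTriangular id)
    (hdiag : ∀ j, (R j j).im = 0) :
    (Rᴴ * R).det = ((∏ j, (R j j).re ^ 2 : ℝ) : ℂ) := by
  rw [det_mul, det_conjTranspose, det_of_isUpperTriangular hR, star_prod,
    ← prod_mul_distrib, Complex.ofReal_prod]
  refine prod_congr rfl fun j _ => ?_
  apply Complex.ext <;> simp [hdiag j, sq]

section SuccessiveCancellation

variable {𝕜 : Type*} [RCLike 𝕜] {m : Type*} [Fintype m] {K : ℕ}
  {ι : Fin K → Type*} [∀ k, Fintype (ι k)] {κ : Fin K → Type*} [∀ k, Fintype (κ k)]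

theorem posDef_of_succ_eq_add {Sig : Fin (K + 1) → Matrix m m 𝕜} {H : ∀ k, Matrix m (ι k) 𝕜}
    {T : ∀ k, Matrix (ι k) (κ k) 𝕜} (h0 : (Sig 0).PosDef)
    (hrec : ∀ k, Sig k.succ = Sig k.castSucc + H k * T k * (T k)ᴴ * (H k)ᴴ) (i : Fin (K + 1)) :
    (Sig i).PosDef := by
  induction i using Fin.induction with
  | zero => exact h0
  | succ k ih =>
    rw [hrec k, Matrix.mul_assoc _ (T k)ᴴ, ← conjTranspose_mul]
    exact ih.add_posSemidef (posSemidef_self_mul_conjTranspose _)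

theorem det_last_eq_det_zero_mul_prod [DecidableEq m] [∀ k, DecidableEq (κ k)]
    {Sig : Fin (K + 1) → Matrix m m 𝕜} {H : ∀ k, Matrix m (ι k) 𝕜}
    {T : ∀ k, Matrix (ι k) (κ k) 𝕜} (h0 : (Sig 0).PosDef)
    (hrec : ∀ k, Sig k.succ = Sig k.castSucc + H k * T k * (T k)ᴴ * (H k)ᴴ) :
    (Sig (Fin.last K)).det =
      (Sig 0).det * ∏ k, (1 + (T k)ᴴ * (H k)ᴴ * (Sig k.castSucc)⁻¹ * H k * T k).det := by
  refine Fin.apply_last_eq_mul_prod (fun i => (Sig i).det) _ fun k => ?_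
  have hunit := (posDef_of_succ_eq_add h0 hrec k.castSucc).isUnit.map detMonoidHom
  rw [hrec k, Matrix.mul_assoc _ (T k)ᴴ, ← conjTranspose_mul, det_add_mul _ _ hunit,
    conjTranspose_mul]
  simp only [Matrix.mul_assoc]

theorem det_one_add_sum_eq_prod_diag_sq [DecidableEq m] [∀ k, DecidableEq (κ k)]
    [∀ k, LinearOrder (κ k)] {Sig : Fin (K + 1) → Matrix m m ℂ} {H : ∀ k, Matrix m (ι k) ℂ}
    {T : ∀ k, Matrix (ι k) (κ k) ℂ} {R : ∀ k, Matrix (κ k) (κ k) ℂ} (h0 : Sig 0 = 1)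
    (hrec : ∀ k, Sig k.succ = Sig k.castSucc + H k * T k * (T k)ᴴ * (H k)ᴴ)
    (hfact : ∀ k, 1 + (T k)ᴴ * (H k)ᴴ * (Sig k.castSucc)⁻¹ * H k * T k = (R k)ᴴ * R k)
    (hR : ∀ k, (R k).BlockTriangular id) (hdiag : ∀ k j, (R k j j).im = 0) :
    (1 + ∑ k, H k * T k * (T k)ᴴ * (H k)ᴴ).det = ((∏ k, ∏ j, (R k j j).re ^ 2 : ℝ) : ℂ) := by
  rw [← h0, ← Fin.apply_last_eq_add_sum Sig _ hrec,
    det_last_eq_det_zero_mul_prod (h0 ▸ PosDef.one) hrec, h0, det_one, one_mul,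
    Complex.ofReal_prod]
  exact prod_congr rfl fun k _ => by
    rw [hfact k, det_conjTranspose_mul_self_of_blockTriangular (hR k) (hdiag k)]

end SuccessiveCancellation

section Precoder

variable {m n : Type*} [Fintype m] [DecidableEq n]

theorem det_one_add_conjTranspose_mul_mul_unitary [Fintype n] (V : Matrix m n ℂ)
    (A : Matrix m m ℂ) {S : Matrix n n ℂ} (hS : S ∈ unitaryGroup n ℂ) :
    (1 + (V * S)ᴴ * A * (V * S)).det = (1 + Vᴴ * A * V).det := by
  have hSS : S * Sᴴ = 1 := mem_unitaryGroup_iff.mp hS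
  rw [conjTranspose_mul, Matrix.mul_assoc, Matrix.mul_assoc, det_one_add_mul_comm]
  simp only [Matrix.mul_assoc, hSS, Matrix.mul_one]

theorem conjTranspose_submatrix_mul_mul_submatrix [DecidableEq m] {U : Matrix m m ℂ}
    (hU : U ∈ unitaryGroup m ℂ) (d : m → ℂ) {e : n → m} (he : Function.Injective e) :
    (U.submatrix id e)ᴴ * (U * diagonal d * Uᴴ) * U.submatrix id e = diagonal (d ∘ e) := by
  have hUU : Uᴴ * U = 1 := mem_unitaryGroup_iff'.mp hU
  calc (U.submatrix id e)ᴴ * (U * diagonal d * Uᴴ) * U.submatrix id e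
      = (Uᴴ * (U * diagonal d * Uᴴ) * U).submatrix e e := by
        rw [submatrix_mul _ _ _ id _ Function.bijective_id,
          submatrix_mul _ _ _ id _ Function.bijective_id, submatrix_id_id, conjTranspose_submatrix]
    _ = (diagonal d).submatrix e e := by
        simp only [← Matrix.mul_assoc, hUU, Matrix.one_mul]
        simp only [Matrix.mul_assoc, hUU, Matrix.mul_one]
    _ = diagonal (d ∘ e) := submatrix_diagonal _ _ he

theorem det_one_add_conjTranspose_mul_mul_eq_prod [DecidableEq m] [Fintype n]
    {U : Matrix m m ℂ} (hU : U ∈ unitaryGroup m ℂ) (lam : m → ℝ) {e : n → m}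
    (he : Function.Injective e) {gam : n → ℝ} (hgam : ∀ j, 0 ≤ gam j)
    {S : Matrix n n ℂ} (hS : S ∈ unitaryGroup n ℂ) :
    (1 + (U.submatrix id e * diagonal (fun j => ((√(gam j) : ℝ) : ℂ)) * S)ᴴ *
        (U * diagonal (fun i => ((lam i : ℝ) : ℂ)) * Uᴴ) *
        (U.submatrix id e * diagonal (fun j => ((√(gam j) : ℝ) : ℂ)) * S)).det =
      ((∏ j, (1 + gam j * lam (e j)) : ℝ) : ℂ) := by
  set D := diagonal (fun j => ((√(gam j) : ℝ) : ℂ))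
  have hDD : Dᴴ = D := by simp [D, diagonal_conjTranspose, Pi.star_def]
  have hcompress : (U.submatrix id e * D)ᴴ * (U * diagonal (fun i => ((lam i : ℝ) : ℂ)) * Uᴴ) *
      (U.submatrix id e * D) =
      D * diagonal ((fun i => ((lam i : ℝ) : ℂ)) ∘ e) * D := by
    rw [← conjTranspose_submatrix_mul_mul_submatrix hU _ he, conjTranspose_mul, hDD]
    simp only [Matrix.mul_assoc]
  rw [det_one_add_conjTranspose_mul_mul_unitary _ _ hS, hcompress, diagonal_mul_diagonal,
    diagonal_mul_diagonal, ← diagonal_one, diagonal_add, det_diagonal, Complex.ofReal_prod]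
  refine prod_congr rfl fun j _ => ?_
  rw [Function.comp_apply, mul_right_comm, ← Complex.ofReal_mul, Real.mul_self_sqrt (hgam j)]
  push_cast
  ring

end Precoder

noncomputable def waterLevel (lam : ℕ → ℝ) (a : ℝ) (r : ℕ) : ℝ :=
  ((∏ i ∈ range r, lam i) / a) ^ ((1 : ℝ) / r)

section WaterFilling

variable {lam : ℕ → ℝ} {a : ℝ} {n r : ℕ}

theorem waterLevel_nonneg (ha : 0 ≤ a) (hlam : ∀ i < r, 0 ≤ lam i) : 0 ≤ waterLevel lam a r :=
  Real.rpow_nonneg (div_nonneg (prod_nonneg fun i hi => hlam i (mem_range.mp hi)) ha) _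

theorem waterLevel_pow (ha : 0 ≤ a) (hlam : ∀ i < r, 0 ≤ lam i) (hr : r ≠ 0) :
    waterLevel lam a r ^ r = (∏ i ∈ range r, lam i) / a := by
  rw [waterLevel, one_div]
  exact Real.rpow_inv_natCast_pow
    (div_nonneg (prod_nonneg fun i hi => hlam i (mem_range.mp hi)) ha) hr

theorem pos_of_waterLevel_lt (ha : 0 ≤ a) (hlam : ∀ i < r, 0 ≤ lam i)
    (hactive : ∀ i < r, waterLevel lam a r < lam i) {i : ℕ} (hi : i < r) : 0 < lam i :=
  (waterLevel_nonneg ha hlam).trans_lt (hactive i hi)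

theorem waterLevel_le_of_lt (ha : 0 < a) (hn : 0 < n) (hnr : n ≤ r)
    (hlam : ∀ i < r, 0 ≤ lam i) (hactive : ∀ i < r, waterLevel lam a r < lam i) :
    waterLevel lam a n ≤ waterLevel lam a r := by
  set G := waterLevel lam a r
  have hpos : ∀ i < r, 0 < lam i := fun i hi => pos_of_waterLevel_lt ha.le hlam hactive hi
  have hGpos : 0 < G :=
    Real.rpow_pos_of_pos (div_pos (prod_pos fun i hi => hpos i (mem_range.mp hi)) ha) _
  have htail : G ^ (r - n) ≤ ∏ i ∈ Ico n r, lam i := by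
    simpa using prod_le_prod (s := Ico n r) (fun _ _ => hGpos.le)
      (fun i hi => (hactive i (mem_Ico.mp hi).2).le)
  -- `∏_{i<n} λ i / a = G ^ r / ∏_{n≤i<r} λ i`, and each dropped `λ i` exceeds `G`.
  have hhead : (∏ i ∈ range n, lam i) / a * G ^ (r - n) ≤ G ^ n * G ^ (r - n) := by
    rw [← pow_add, Nat.add_sub_cancel' hnr, waterLevel_pow ha.le hlam (hn.trans_le hnr).ne',
      ← prod_range_mul_prod_Ico lam hnr, mul_div_right_comm]
    exact mul_le_mul_of_nonneg_left htail
      (div_nonneg (prod_nonneg fun i hi => (hpos i ((mem_range.mp hi).trans_le hnr)).le) ha.le)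
  rw [← waterLevel_pow ha.le (fun i hi => hlam i (hi.trans_le hnr)) hn.ne'] at hhead
  exact (pow_le_pow_iff_left₀ (waterLevel_nonneg ha.le fun i hi => hlam i (hi.trans_le hnr))
    hGpos.le hn.ne').mp (le_of_mul_le_mul_right hhead (pow_pos hGpos _))

theorem inverse_waterfilling {gam : ℕ → ℝ} (ha : 0 < a) (hn : 0 < n) (hnr : n ≤ r)
    (hlam : ∀ i < r, 0 ≤ lam i)
    (hgam : ∀ i < n, gam i = (a / ∏ j ∈ range n, lam j) ^ ((1 : ℝ) / n) - (lam i)⁻¹)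
    (hactive : ∀ i < r, waterLevel lam a r < lam i) :
    (∀ i < n, 0 ≤ gam i) ∧ ∏ i ∈ range n, (1 + gam i * lam i) = a := by
  have hpos : ∀ i < n, 0 < lam i :=
    fun i hi => pos_of_waterLevel_lt ha.le hlam hactive (hi.trans_le hnr)
  have hlamn : ∀ i < n, 0 ≤ lam i := fun i hi => (hpos i hi).le
  set g := waterLevel lam a n
  have hgpos : 0 < g :=
    Real.rpow_pos_of_pos (div_pos (prod_pos fun i hi => hpos i (mem_range.mp hi)) ha) _
  have hgam' : ∀ i < n, gam i = g⁻¹ - (lam i)⁻¹ := fun i hi => by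
    rw [hgam i hi, ← inv_div, Real.inv_rpow (div_nonneg (prod_nonneg fun j hj =>
      hlamn j (mem_range.mp hj)) ha.le)]
    rfl
  refine ⟨fun i hi => ?_, ?_⟩
  · rw [hgam' i hi, sub_nonneg]
    exact inv_anti₀ hgpos ((waterLevel_le_of_lt ha hn hnr hlam hactive).trans
      (hactive i (hi.trans_le hnr)).le)
  · rw [prod_congr rfl fun i hi => show 1 + gam i * lam i = g⁻¹ * lam i by
      rw [hgam' i (mem_range.mp hi), sub_mul, inv_mul_cancel₀ (hpos i (mem_range.mp hi)).ne']
      ring,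
      prod_mul_distrib, prod_const, card_range, inv_pow, waterLevel_pow ha.le hlamn hn.ne',
      inv_div, div_mul_cancel₀ _ (prod_pos fun i hi => hpos i (mem_range.mp hi)).ne']

end WaterFilling

theorem det_one_add_waterfilling_precoder {m n r : ℕ} (hn : 0 < n) (hnr : n ≤ r) (hnm : n ≤ m)
    {U : Matrix (Fin m) (Fin m) ℂ} (hU : U ∈ unitaryGroup (Fin m) ℂ) {lam gam : ℕ → ℝ} {a : ℝ}
    (ha : 0 < a) (hlam : ∀ i < r, 0 ≤ lam i)
    (hgam : ∀ i < n, gam i = (a / ∏ j ∈ range n, lam j) ^ ((1 : ℝ) / n) - (lam i)⁻¹)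
    (hactive : ∀ i < r, waterLevel lam a r < lam i)
    {S : Matrix (Fin n) (Fin n) ℂ} (hS : S ∈ unitaryGroup (Fin n) ℂ) :
    (1 + (U.submatrix id (Fin.castLE hnm) *
          diagonal (fun j : Fin n => ((√(gam j) : ℝ) : ℂ)) * S)ᴴ *
        (U * diagonal (fun i : Fin m => ((lam i : ℝ) : ℂ)) * Uᴴ) *
        (U.submatrix id (Fin.castLE hnm) *
          diagonal (fun j : Fin n => ((√(gam j) : ℝ) : ℂ)) * S)).det =
      (a : ℂ) := by
  obtain ⟨hgam0, hprod⟩ := inverse_waterfilling ha hn hnr hlam hgam hactive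
  rw [det_one_add_conjTranspose_mul_mul_eq_prod hU _ (Fin.castLE_injective hnm)
    (fun j => hgam0 j j.isLt) hS, ← hprod, ← Fin.prod_univ_eq_prod_range]
  rfl

theorem eq_of_prod_sq_eq_pow {ι : Type*} [Fintype ι] {d : ι → ℝ} {ρ : ℝ} (hd : ∀ i, 0 ≤ d i)
    (hρ : 0 ≤ ρ) (hconst : ∀ i j, d i = d j) (h : ∏ i, d i ^ 2 = ρ ^ (2 * Fintype.card ι)) (i : ι) :
    d i = ρ := by
  have hcard : Fintype.card ι ≠ 0 := (Fintype.card_pos_iff.mpr ⟨i⟩).ne'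
  rw [prod_congr rfl fun j _ => by rw [hconst j i], prod_const, card_univ, ← pow_mul] at h
  exact (pow_left_inj₀ (hd i) hρ (by positivity)).mp h

theorem rpow_div_two_mul_pow {b : ℝ} (hb : 0 ≤ b) (c : ℝ) (n N : ℕ) :
    (b ^ (c / (2 * N))) ^ (2 * n) = b ^ ((n : ℝ) / N * c) := by
  rw [← Real.rpow_natCast, ← Real.rpow_mul hb]
  push_cast
  ring_nf

section MeanSquaredError

variable {ι : Type*} [Fintype ι] {κ : ι → Type*} [∀ i, Fintype (κ i)] {d : ∀ i, κ i → ℝ}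
  {n : ℕ} {b c : ℝ}

theorem mean_inv_sq_of_forall_eq (hn : n = ∑ i, Fintype.card (κ i)) (hn0 : 0 < n) (hb : 0 ≤ b)
    (hd : ∀ i j, d i j = b ^ (c / (2 * n))) :
    (1 / n) * ∑ i, ∑ j, d i j ^ (-2 : ℤ) = b ^ (-(c / n)) := by
  simp only [hd, sum_const, card_univ, nsmul_eq_mul, ← sum_mul]
  rw [← Nat.cast_sum, ← hn, one_div, inv_mul_cancel_left₀ (by positivity), ← Real.rpow_intCast,
    ← Real.rpow_mul hb]
  push_cast
  ring_nf

theorem rpow_neg_div_le_mean_inv_sq (hd : ∀ i j, 0 < d i j) (hn : n = ∑ i, Fintype.card (κ i))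
    (hn0 : 0 < n) (hb : 0 ≤ b) (h : ∏ i, ∏ j, d i j ^ 2 = b ^ c) :
    b ^ (-(c / n)) ≤ (1 / n) * ∑ i, ∑ j, d i j ^ (-2 : ℤ) := by
  have hcard : (∑ _x : Σ i, κ i, (1 : ℝ)) = n := by simp [hn]
  have hamgm := Real.geom_mean_le_arith_mean univ (fun _ => 1)
    (fun x : Σ i, κ i => d x.1 x.2 ^ (-2 : ℤ)) (fun _ _ => zero_le_one)
    (by rw [hcard]; exact_mod_cast hn0) (fun x _ => (zpow_pos (hd x.1 x.2) _).le)
  simp only [Real.rpow_one, one_mul, hcard, Fintype.prod_sigma' (fun i j => d i j ^ (-2 : ℤ)),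
    Fintype.sum_sigma' (fun i j => d i j ^ (-2 : ℤ))] at hamgm
  refine le_of_eq_of_le ?_ (one_div_mul_eq_div (n : ℝ) _ ▸ hamgm)
  simp only [_root_.zpow_neg, zpow_two, ← sq, prod_inv_distrib]
  rw [h, Real.inv_rpow (Real.rpow_nonneg hb _), ← Real.rpow_mul hb, Real.rpow_neg hb,
    div_eq_mul_inv]

end MeanSquaredError

theorem multiuser_transceiver_attains_min_avg_mse_general {P K : ℕ}
    (Mdim N : Fin K → ℕ)
    (H : ∀ k : Fin K, Matrix (Fin P) (Fin (Mdim k)) ℂ)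
    (hNpos' : ∀ k, 0 < N k) (hNM : ∀ k, N k ≤ Mdim k)
    (Ntot : ℕ) (hNtot : Ntot = ∑ k, N k) (hNpos : 0 < Ntot)
    (Info : ℝ)
    (Sig : Fin (K + 1) → Matrix (Fin P) (Fin P) ℂ)
    (A : ∀ k : Fin K, Matrix (Fin (Mdim k)) (Fin (Mdim k)) ℂ)
    (hA : ∀ k, A k = (H k)ᴴ * (Sig k.castSucc)⁻¹ * H k)
    (U : ∀ k : Fin K, Matrix (Fin (Mdim k)) (Fin (Mdim k)) ℂ)
    (hU : ∀ k, U k ∈ Matrix.unitaryGroup (Fin (Mdim k)) ℂ)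
    (lam : Fin K → ℕ → ℝ)
    (hdecomp : ∀ k, A k =
      U k * Matrix.diagonal (fun i : Fin (Mdim k) => ((lam k i : ℝ) : ℂ)) * (U k)ᴴ)
    (hnonneg : ∀ k, ∀ n < Mdim k, 0 ≤ lam k n)
    (r : Fin K → ℕ)
    (hrM : ∀ k, r k ≤ Mdim k)
    (hactive : ∀ k, ∀ n < r k,
      ((∏ i ∈ Finset.range (r k), lam k i) / 2 ^ ((N k : ℝ) / Ntot * Info))
          ^ ((1 : ℝ) / (r k)) < lam k n)
    (hNr : ∀ k, N k ≤ r k)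
    (gam : Fin K → ℕ → ℝ)
    (hgam : ∀ k, ∀ n < N k, gam k n =
      (2 ^ ((N k : ℝ) / Ntot * Info) / ∏ i ∈ Finset.range (N k), lam k i)
          ^ ((1 : ℝ) / (N k)) - (lam k n)⁻¹)
    (S : ∀ k : Fin K, Matrix (Fin (N k)) (Fin (N k)) ℂ)
    (hS : ∀ k, S k ∈ Matrix.unitaryGroup (Fin (N k)) ℂ)
    (T : ∀ k : Fin K, Matrix (Fin (Mdim k)) (Fin (N k)) ℂ)
    (hT : ∀ k, T k = (U k).submatrix id (Fin.castLE (hNM k)) *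
      Matrix.diagonal (fun n : Fin (N k) => ((Real.sqrt (gam k n) : ℝ) : ℂ)) * S k)
    (J : ∀ k : Fin K, Matrix (Fin (N k)) (Fin (N k)) ℂ)
    (hJ : ∀ k, J k = 1 + (T k)ᴴ * (H k)ᴴ * (Sig k.castSucc)⁻¹ * (H k) * T k)
    (R : ∀ k : Fin K, Matrix (Fin (N k)) (Fin (N k)) ℂ)
    (hfact : ∀ k, J k = (R k)ᴴ * R k)
    (hTri : ∀ k, (R k).BlockTriangular id)
    (hdiag : ∀ k, ∀ j, ((R k) j j).im = 0 ∧ 0 < ((R k) j j).re)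
    -- `S k` is the S-factor of the equal-diagonal QRS decomposition of `(J k)^(1/2)`:
    -- it makes the Cholesky R-factor of `J k` have equal diagonal entries.
    (hSchoice : ∀ k, ∀ i j, (R k) i i = (R k) j j) :
    (∀ k, ∀ j, (R k) j j = (((2 : ℝ) ^ (Info / (2 * Ntot)) : ℝ) : ℂ)) ∧
    (1 / Ntot) * (∑ k, ∑ j, (((R k) j j).re) ^ (-2 : ℤ)) = (2 : ℝ) ^ (-(Info / Ntot)) ∧
    (∀ (T' : ∀ k : Fin K, Matrix (Fin (Mdim k)) (Fin (N k)) ℂ)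
        (Sig' : Fin (K + 1) → Matrix (Fin P) (Fin P) ℂ)
        (R' : ∀ k : Fin K, Matrix (Fin (N k)) (Fin (N k)) ℂ),
      Sig' 0 = 1 →
      (∀ k : Fin K, Sig' k.succ = Sig' k.castSucc + H k * T' k * (T' k)ᴴ * (H k)ᴴ) →
      (∀ k, (1 : Matrix (Fin (N k)) (Fin (N k)) ℂ)
          + (T' k)ᴴ * (H k)ᴴ * (Sig' k.castSucc)⁻¹ * (H k) * T' k = (R' k)ᴴ * R' k) →
      (∀ k, (R' k).BlockTriangular id) →
      (∀ k, ∀ j, ((R' k) j j).im = 0 ∧ 0 < ((R' k) j j).re) →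
      Real.logb 2 ((1 + ∑ k, H k * T' k * (T' k)ᴴ * (H k)ᴴ).det).re = Info →
      (1 / Ntot) * (∑ k, ∑ j, (((R k) j j).re) ^ (-2 : ℤ)) ≤
        (1 / Ntot) * (∑ k, ∑ j, (((R' k) j j).re) ^ (-2 : ℤ))) := by
  have hdetJ : ∀ k, ∏ j, ((R k) j j).re ^ 2 =
      ((2 : ℝ) ^ (Info / (2 * Ntot))) ^ (2 * Fintype.card (Fin (N k))) := fun k => by
    have hJA : J k = 1 + (T k)ᴴ * A k * T k := by
      rw [hJ k, hA k]
      simp only [Matrix.mul_assoc]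
    apply Complex.ofReal_injective
    rw [← det_conjTranspose_mul_self_of_blockTriangular (hTri k) fun j => (hdiag k j).1,
      ← hfact k, hJA, hdecomp k, hT k, Fintype.card_fin, rpow_div_two_mul_pow zero_le_two,
      det_one_add_waterfilling_precoder (hNpos' k) (hNr k) (hNM k) (hU k) (by positivity)
        (fun i hi => hnonneg k i (hi.trans_le (hrM k))) (hgam k) (hactive k) (hS k)]
  have hR : ∀ k j, ((R k) j j).re = (2 : ℝ) ^ (Info / (2 * Ntot)) := fun k =>
    eq_of_prod_sq_eq_pow (fun j => (hdiag k j).2.le) (by positivity)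
      (fun i j => congrArg Complex.re (hSchoice k i j)) (hdetJ k)
  have hNsum : Ntot = ∑ k, Fintype.card (Fin (N k)) := by simp [hNtot]
  have hdesign := mean_inv_sq_of_forall_eq hNsum hNpos zero_le_two hR
  refine ⟨fun k j => Complex.ext (by simp [hR]) (by simp [(hdiag k j).1]), hdesign, ?_⟩
  intro T' Sig' R' h0 hrec hJ' hTri' hdiag' hInfo
  rw [det_one_add_sum_eq_prod_diag_sq h0 hrec hJ' hTri' fun k j => (hdiag' k j).1,
    Complex.ofReal_re] at hInfo
  rw [hdesign]
  refine rpow_neg_div_le_mean_inv_sq (fun k j => (hdiag' k j).2) hNsum hNpos zero_le_two ?_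
  rw [← hInfo, Real.rpow_logb two_pos one_lt_two.ne'
    (prod_pos fun k _ => prod_pos fun j _ => pow_pos (hdiag' k j).2 2)]

/-- Optimality of the main theorem's design: with the recursively
built inverse water-filling precoders `T̃ k` (per-user information
`𝒾_k = (N k / N) 𝒾`, `N k ≤ r k` for all `k`) and with each `S k` chosen as the
S-factor of the equal-diagonal QRS decomposition of `(J k)^(1/2)` — i.e. such that the
Cholesky R-factor `R k` of `J k = I + (T̃ k)ᴴ (H k)ᴴ (Σ k)⁻¹ (H k) (T̃ k)` has equal
diagonal entries — every diagonal entry of `R k` equals `2 ^ (𝒾 / (2N))`, the average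
MSE equals `(1/N) ∑ k ∑ j, ([R k] j j)⁻² = 2 ^ (−𝒾/N)`, and hence the `T̃ k` attain the
minimum average MSE among all precoder sequences achieving sum mutual information `𝒾`. -/
theorem multiuser_transceiver_attains_min_avg_mse {P K : ℕ}
    (Mdim L N : Fin K → ℕ)
    (H : ∀ k : Fin K, Matrix (Fin P) (Fin (Mdim k)) ℂ)
    (hrank : ∀ k, (H k).rank = L k)
    (hNpos' : ∀ k, 0 < N k) (hNL : ∀ k, N k ≤ L k) (hNM : ∀ k, N k ≤ Mdim k)
    (Ntot : ℕ) (hNtot : Ntot = ∑ k, N k) (hNpos : 0 < Ntot)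
    (Info : ℝ) (hI : 0 < Info)
    (Sig : Fin (K + 1) → Matrix (Fin P) (Fin P) ℂ)
    (hSig0 : Sig 0 = 1)
    (A : ∀ k : Fin K, Matrix (Fin (Mdim k)) (Fin (Mdim k)) ℂ)
    (hA : ∀ k, A k = (H k)ᴴ * (Sig k.castSucc)⁻¹ * H k)
    (U : ∀ k : Fin K, Matrix (Fin (Mdim k)) (Fin (Mdim k)) ℂ)
    (hU : ∀ k, U k ∈ Matrix.unitaryGroup (Fin (Mdim k)) ℂ)
    (lam : Fin K → ℕ → ℝ)
    (hdecomp : ∀ k, A k =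
      U k * Matrix.diagonal (fun i : Fin (Mdim k) => ((lam k i : ℝ) : ℂ)) * (U k)ᴴ)
    (hmono : ∀ k, ∀ i j : ℕ, i ≤ j → j < Mdim k → lam k j ≤ lam k i)
    (hnonneg : ∀ k, ∀ n < Mdim k, 0 ≤ lam k n)
    (r : Fin K → ℕ)
    (hrpos : ∀ k, 0 < r k) (hrM : ∀ k, r k ≤ Mdim k)
    (hactive : ∀ k, ∀ n < r k,
      ((∏ i ∈ Finset.range (r k), lam k i) / 2 ^ ((N k : ℝ) / Ntot * Info))
          ^ ((1 : ℝ) / (r k)) < lam k n)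
    (hmax : ∀ k, ∀ r', r k < r' → r' ≤ Mdim k →
      ¬ (∀ n < r',
        ((∏ i ∈ Finset.range r', lam k i) / 2 ^ ((N k : ℝ) / Ntot * Info))
            ^ ((1 : ℝ) / r') < lam k n))
    (hNr : ∀ k, N k ≤ r k)
    (gam : Fin K → ℕ → ℝ)
    (hgam : ∀ k, ∀ n < N k, gam k n =
      (2 ^ ((N k : ℝ) / Ntot * Info) / ∏ i ∈ Finset.range (N k), lam k i)
          ^ ((1 : ℝ) / (N k)) - (lam k n)⁻¹)
    (S : ∀ k : Fin K, Matrix (Fin (N k)) (Fin (N k)) ℂ)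
    (hS : ∀ k, S k ∈ Matrix.unitaryGroup (Fin (N k)) ℂ)
    (T : ∀ k : Fin K, Matrix (Fin (Mdim k)) (Fin (N k)) ℂ)
    (hT : ∀ k, T k = (U k).submatrix id (Fin.castLE (hNM k)) *
      Matrix.diagonal (fun n : Fin (N k) => ((Real.sqrt (gam k n) : ℝ) : ℂ)) * S k)
    (hSigS : ∀ k : Fin K,
      Sig k.succ = Sig k.castSucc + H k * T k * (T k)ᴴ * (H k)ᴴ)
    (J : ∀ k : Fin K, Matrix (Fin (N k)) (Fin (N k)) ℂ)
    (hJ : ∀ k, J k = 1 + (T k)ᴴ * (H k)ᴴ * (Sig k.castSucc)⁻¹ * (H k) * T k)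
    (R : ∀ k : Fin K, Matrix (Fin (N k)) (Fin (N k)) ℂ)
    (hfact : ∀ k, J k = (R k)ᴴ * R k)
    (hTri : ∀ k, (R k).BlockTriangular id)
    (hdiag : ∀ k, ∀ j, ((R k) j j).im = 0 ∧ 0 < ((R k) j j).re)
    -- `S k` is the S-factor of the equal-diagonal QRS decomposition of `(J k)^(1/2)`:
    -- it makes the Cholesky R-factor of `J k` have equal diagonal entries.
    (hSchoice : ∀ k, ∀ i j, (R k) i i = (R k) j j) :
    (∀ k, ∀ j, (R k) j j = (((2 : ℝ) ^ (Info / (2 * Ntot)) : ℝ) : ℂ)) ∧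
    (1 / Ntot) * (∑ k, ∑ j, (((R k) j j).re) ^ (-2 : ℤ)) = (2 : ℝ) ^ (-(Info / Ntot)) ∧
    (∀ (T' : ∀ k : Fin K, Matrix (Fin (Mdim k)) (Fin (N k)) ℂ)
        (Sig' : Fin (K + 1) → Matrix (Fin P) (Fin P) ℂ)
        (R' : ∀ k : Fin K, Matrix (Fin (N k)) (Fin (N k)) ℂ),
      Sig' 0 = 1 →
      (∀ k : Fin K, Sig' k.succ = Sig' k.castSucc + H k * T' k * (T' k)ᴴ * (H k)ᴴ) →
      (∀ k, (1 : Matrix (Fin (N k)) (Fin (N k)) ℂ)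
          + (T' k)ᴴ * (H k)ᴴ * (Sig' k.castSucc)⁻¹ * (H k) * T' k = (R' k)ᴴ * R' k) →
      (∀ k, (R' k).BlockTriangular id) →
      (∀ k, ∀ j, ((R' k) j j).im = 0 ∧ 0 < ((R' k) j j).re) →
      Real.logb 2 ((1 + ∑ k, H k * T' k * (T' k)ᴴ * (H k)ᴴ).det).re = Info →
      (1 / Ntot) * (∑ k, ∑ j, (((R k) j j).re) ^ (-2 : ℤ)) ≤
        (1 / Ntot) * (∑ k, ∑ j, (((R' k) j j).re) ^ (-2 : ℤ))) :=
  multiuser_transceiver_attains_min_avg_mse_general Mdim N H hNpos' hNM Ntot hNtot hNpos Info Sig A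
    hA U hU lam hdecomp hnonneg r hrM hactive hNr gam hgam S hS T hT J hJ R hfact hTri hdiag
    hSchoice
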